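/- For the concrete 11-dimensional constant-rate multi-mode system H with 12 modes and safety set S described below, the target point x_t (the point with w3 = 1 and all other coordinates 0) is NOT S-safe reachable from the start point x_s (the point with s0 = 1 and all other coordinates 0): no finite schedule with an S-safe run steers H from x_s to x_t. -/

import Mathlib

/-- The 11 coordinates of the concrete multi-mode system. -/
inductive V11 | s0 | c1 | c2 | w01 | w12 | z2 | w3 | x01 | x12 | x23 | x20
deriving DecidableEq

/-- The 12 modes of the concrete multi-mode system. -/
inductive M11 | I | M0 | M1 | M2a | M2b | M01 | M12 | M20 | M23 | M3 | M3c1 | M3c2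
deriving DecidableEq

/-- The rate vectors of the concrete system (unmentioned coordinates have rate 0). -/
def rate11 : M11 → V11 → ℝ
  | .I, .s0 => -1
  | .I, .w01 => 1
  | .M0, .w01 => -1
  | .M0, .x01 => 1
  | .M0, .c1 => 1
  | .M1, .w12 => -1
  | .M1, .x12 => 1
  | .M1, .c1 => -1
  | .M2a, .z2 => -1
  | .M2a, .x23 => 1
  | .M2b, .z2 => -1
  | .M2b, .x20 => 1
  | .M01, .x01 => -1
  | .M01, .w12 => 1
  | .M12, .x12 => -1
  | .M12, .z2 => 1
  | .M20, .x20 => -1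
  | .M20, .w01 => 1
  | .M23, .x23 => -1
  | .M23, .w3 => 1
  | .M3, .w3 => -1
  | .M3c1, .c1 => -1
  | .M3c1, .w3 => 1
  | .M3c2, .c2 => -1
  | .M3c2, .w3 => 1
  | _, _ => 0

/-- The safety set `S`: conjunction of conditions (1)–(7). -/
def S11 : Set (V11 → ℝ) :=
  { p |
    -- (1)
    (0 ≤ p .s0 ∧ p .s0 ≤ 1) ∧ (0 ≤ p .w01 ∧ p .w01 ≤ 1) ∧ (0 ≤ p .w12 ∧ p .w12 ≤ 1) ∧
    (0 ≤ p .z2 ∧ p .z2 ≤ 1) ∧ (0 ≤ p .x01 ∧ p .x01 ≤ 1) ∧ (0 ≤ p .x12 ∧ p .x12 ≤ 1) ∧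
    (0 ≤ p .x23 ∧ p .x23 ≤ 1) ∧ (0 ≤ p .x20 ∧ p .x20 ≤ 1) ∧
    0 ≤ p .w3 ∧ 0 ≤ p .c1 ∧ 0 ≤ p .c2 ∧
    -- (2) at most one of x01, x12, x23, x20 is positive
    ¬(0 < p .x01 ∧ 0 < p .x12) ∧ ¬(0 < p .x01 ∧ 0 < p .x23) ∧ ¬(0 < p .x01 ∧ 0 < p .x20) ∧
    ¬(0 < p .x12 ∧ 0 < p .x23) ∧ ¬(0 < p .x12 ∧ 0 < p .x20) ∧ ¬(0 < p .x23 ∧ 0 < p .x20) ∧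
    -- (3)
    (0 < p .w01 → p .w12 = 0 ∧ p .z2 = 0) ∧
    (0 < p .w12 → p .w01 = 0 ∧ p .z2 = 0) ∧
    -- (4)
    (0 < p .z2 → p .w01 = 0 ∧ p .w12 = 0) ∧
    -- (5)
    (0 < p .s0 → p .x01 = 0 ∧ p .x12 = 0 ∧ p .x23 = 0 ∧ p .x20 = 0) ∧
    -- (6)
    (0 < p .w3 → p .s0 = 0 ∧ p .w01 = 0 ∧ p .w12 = 0 ∧ p .z2 = 0 ∧
      p .x01 = 0 ∧ p .x12 = 0 ∧ p .x20 = 0) ∧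
    -- (7)
    (0 < p .x23 → p .x23 + p .w3 = 1) }

/-- The start point: `s0 = 1`, all other coordinates `0`. -/
def xs11 : V11 → ℝ := fun v => if v = .s0 then 1 else 0

/-- The target point: `w3 = 1`, all other coordinates `0`. -/
def xt11 : V11 → ℝ := fun v => if v = .w3 then 1 else 0

/-- The terminal state of the run of a schedule (a list of timed actions) from a state. -/
def runEnd {M V : Type*} [AddCommGroup V] [Module ℝ V] (R : M → V) : V → List (M × ℝ) → V
  | x, [] => x
  | x, (m, t) :: σ => runEnd R (x + t • R m) σ

/-- A schedule is `S`-safe from `x` if every point visited during its run lies in `S`. -/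
def SafeSched {M V : Type*} [AddCommGroup V] [Module ℝ V] (R : M → V) (S : Set V) :
    V → List (M × ℝ) → Prop
  | _, [] => True
  | x, (m, t) :: σ =>
      (∀ τ ∈ Set.Icc (0 : ℝ) t, x + τ • R m ∈ S) ∧ SafeSched R S (x + t • R m) σ

/-!
Along every safe run from `x_s` the coordinates `c2`, `x23`, `w3` stay `0` and the token mass
`s0 + w01 + w12 + z2 + x01 + x12 + x23 + x20` stays `1`, whereas `x_t` has `w3 = 1`. Every mode
other than `M2a, M23, M3, M3c1, M3c2` preserves these quantities, and none of those five can run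
for positive time from such a point: `M23`, `M3`, `M3c2` would drive a coordinate below `0`,
`M2a` violates (7) and `M3c1` violates (6).
-/

theorem runEnd_mem_of_invariant {M V : Type*} [AddCommGroup V] [Module ℝ V] {R : M → V}
    {S I : Set V}
    (hI : ∀ x ∈ I, ∀ m t, 0 ≤ t → (∀ τ ∈ Set.Icc (0 : ℝ) t, x + τ • R m ∈ S) →
      x + t • R m ∈ I) :
    ∀ {σ : List (M × ℝ)} {x : V}, (∀ q ∈ σ, 0 ≤ q.2) → SafeSched R S x σ → x ∈ I →
      runEnd R x σ ∈ I
  | [], _, _, _, hx => hx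
  | (m, t) :: σ, x, hσ, hsafe, hx =>
      runEnd_mem_of_invariant hI (σ := σ) (fun q hq => hσ q (List.mem_cons_of_mem _ hq))
        hsafe.2 (hI x hx m t (hσ _ List.mem_cons_self) hsafe.1)

def tokenMass (p : V11 → ℝ) : ℝ :=
  p .s0 + p .w01 + p .w12 + p .z2 + p .x01 + p .x12 + p .x23 + p .x20

namespace S11

variable {p : V11 → ℝ}

lemma nonneg_of_mem (h : p ∈ S11) : 0 ≤ p .x23 ∧ 0 ≤ p .w3 ∧ 0 ≤ p .c2 := by
  grind [S11]

lemma tokenMass_eq_x23_of_mem (h : p ∈ S11) (hw3 : 0 < p .w3) : tokenMass p = p .x23 := by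
  grind [S11, tokenMass]

lemma x23_add_w3_of_mem (h : p ∈ S11) (hx23 : 0 < p .x23) : p .x23 + p .w3 = 1 := by
  grind [S11]

end S11

open S11

def reachInvariant : Set (V11 → ℝ) :=
  {p | p .c2 = 0 ∧ p .x23 = 0 ∧ p .w3 = 0 ∧ tokenMass p = 1}

def blockedModes : Set M11 := {.M2a, .M23, .M3, .M3c1, .M3c2}

lemma xs11_mem_reachInvariant : xs11 ∈ reachInvariant := by
  simp [reachInvariant, tokenMass, xs11]

lemma xt11_not_mem_reachInvariant : xt11 ∉ reachInvariant := by
  simp [reachInvariant, xt11]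

lemma add_smul_rate11_mem_reachInvariant {x : V11 → ℝ} (hx : x ∈ reachInvariant) {m : M11}
    (hm : m ∉ blockedModes) (t : ℝ) : x + t • rate11 m ∈ reachInvariant := by
  obtain ⟨hc2, hx23, hw3, hmass⟩ := hx
  simp only [blockedModes, Set.mem_insert_iff, Set.mem_singleton_iff, not_or] at hm
  cases m <;> simp_all [reachInvariant, tokenMass, rate11] <;> linarith

lemma eq_zero_of_safe_blocked {x : V11 → ℝ} (hx : x ∈ reachInvariant) {m : M11}
    (hm : m ∈ blockedModes) {t : ℝ} (ht : 0 ≤ t)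
    (hsafe : ∀ τ ∈ Set.Icc (0 : ℝ) t, x + τ • rate11 m ∈ S11) : t = 0 := by
  obtain ⟨hc2, hx23, hw3, hmass⟩ := hx
  by_contra ht0
  have htpos : 0 < t := lt_of_le_of_ne ht (Ne.symm ht0)
  have hend := hsafe t ⟨ht, le_rfl⟩
  simp only [blockedModes, Set.mem_insert_iff, Set.mem_singleton_iff] at hm
  rcases hm with rfl | rfl | rfl | rfl | rfl
  · -- (7) forces `x23 = 1` whenever `x23 > 0`, which cannot hold at both `τ = t / 2` and `τ = t`.
    have hmid := hsafe (t / 2) ⟨by linarith, by linarith⟩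
    have h1 := x23_add_w3_of_mem hend
    have h2 := x23_add_w3_of_mem hmid
    simp only [Pi.add_apply, Pi.smul_apply, rate11, smul_eq_mul, mul_one, mul_zero, zero_add,
      add_zero, hx23, hw3] at h1 h2
    linarith [h1 htpos, h2 (by linarith)]
  · have hx23' := (nonneg_of_mem hend).1
    simp only [Pi.add_apply, Pi.smul_apply, rate11, smul_eq_mul, mul_neg, mul_one, hx23] at hx23'
    linarith
  · have hw3' := (nonneg_of_mem hend).2.1
    simp only [Pi.add_apply, Pi.smul_apply, rate11, smul_eq_mul, mul_neg, mul_one, hw3] at hw3'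
    linarith
  · have hmass' := tokenMass_eq_x23_of_mem hend (by simp [rate11, hw3, htpos])
    simp only [tokenMass, Pi.add_apply, Pi.smul_apply, rate11, smul_eq_mul, mul_zero, add_zero,
      hx23] at hmass' hmass
    linarith
  · have hc2' := (nonneg_of_mem hend).2.2
    simp only [Pi.add_apply, Pi.smul_apply, rate11, smul_eq_mul, mul_neg, mul_one, hc2] at hc2'
    linarith

lemma add_smul_rate11_mem_reachInvariant_of_safe {x : V11 → ℝ} (hx : x ∈ reachInvariant)
    (m : M11) {t : ℝ} (ht : 0 ≤ t) (hsafe : ∀ τ ∈ Set.Icc (0 : ℝ) t, x + τ • rate11 m ∈ S11) :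
    x + t • rate11 m ∈ reachInvariant := by
  by_cases hm : m ∈ blockedModes
  · rwa [eq_zero_of_safe_blocked hx hm ht hsafe, zero_smul, add_zero]
  · exact add_smul_rate11_mem_reachInvariant hx hm t

/-- The target point `x_t` is not `S`-safe reachable from `x_s` in the concrete
11-dimensional multi-mode system: no finite schedule with an `S`-safe run steers
the system from `x_s` to `x_t`. -/
theorem stmt11 :
    ¬ ∃ σ : List (M11 × ℝ), (∀ q ∈ σ, 0 ≤ q.2) ∧
      SafeSched rate11 S11 xs11 σ ∧ runEnd rate11 xs11 σ = xt11 := by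
  rintro ⟨σ, hσ, hsafe, hend⟩
  apply xt11_not_mem_reachInvariant
  rw [← hend]
  exact runEnd_mem_of_invariant (fun x hx m _ ht hseg =>
    add_smul_rate11_mem_reachInvariant_of_safe hx m ht hseg) hσ hsafe xs11_mem_reachInvariant
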